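/- arXiv:1209.0848 — 6 statements merged into one kernel-verified Lean document; each statement's English description precedes it below -/
import Mathlib

section
/- Let (F, φ) : (A, *, α) → (B, *, β) be a form functor between categories with duality. If F is an equivalence of categories and the duality compatibility morphism φ is a natural isomorphism, then the induced functor (F, φ)_h : A_h → B_h between the categories of symmetric forms is an equivalence of categories. -/
open CategoryTheory Opposite

universe v₁ v₂ u₁ u₂

/-- A category with duality: a category `C` together with a functor `dual : Cᵒᵖ ⥤ C`
and a double dual identification `eta : 1 ⟶ ∗∗` satisfying `(eta_X)^∗ ∘ eta_{X^∗} = 1`. -/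
structure DualityData (C : Type u₁) [Category.{v₁} C] where
  dual : Cᵒᵖ ⥤ C
  eta : 𝟭 C ⟶ dual.rightOp ⋙ dual
  coherence :
    ∀ X : C, eta.app (dual.obj (op X)) ≫ dual.map (eta.app X).op = 𝟙 (dual.obj (op X))

/-- A symmetric form in a category with duality: an object together with a morphism
`form : X ⟶ X^∗` satisfying `form^∗ ∘ eta_X = form`. -/
structure SymmForm {C : Type u₁} [Category.{v₁} C] (D : DualityData C) where
  carrier : C
  form : carrier ⟶ D.dual.obj (op carrier)
  symm : D.eta.app carrier ≫ D.dual.map form.op = form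

/-- The category of symmetric forms `C_h`: morphisms `(X, ξ) ⟶ (Y, ψ)` are morphisms
`f : X ⟶ Y` with `ξ = f^∗ ∘ ψ ∘ f`. -/
instance SymmForm.instCategory {C : Type u₁} [Category.{v₁} C] (D : DualityData C) :
    Category (SymmForm D) where
  Hom a b := { f : a.carrier ⟶ b.carrier // a.form = f ≫ b.form ≫ D.dual.map f.op }
  id a := ⟨𝟙 a.carrier, by simp⟩
  comp {a b c} f g := ⟨f.1 ≫ g.1, by
    obtain ⟨f, hf⟩ := f
    obtain ⟨g, hg⟩ := g
    dsimp only
    rw [hf, hg]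
    simp⟩
  id_comp f := Subtype.ext (Category.id_comp f.1)
  comp_id f := Subtype.ext (Category.comp_id f.1)
  assoc f g h := Subtype.ext (Category.assoc f.1 g.1 h.1)

/-- A form functor between categories with duality: a functor `F` together with a duality
compatibility natural transformation `duality` with components `F(X^∗) ⟶ (F X)^∗`
compatible with the double dual identifications. -/
structure FormFunctor {A : Type u₁} [Category.{v₁} A] {B : Type u₂} [Category.{v₂} B]
    (DA : DualityData A) (DB : DualityData B) where
  F : A ⥤ B
  duality : DA.dual ⋙ F ⟶ F.op ⋙ DB.dual
  compat : ∀ X : A,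
    DB.eta.app (F.obj X) ≫ DB.dual.map (duality.app (op X)).op
      = F.map (DA.eta.app X) ≫ duality.app (op (DA.dual.obj (op X)))

/-- The induced functor `(F, φ)_h : A_h ⟶ B_h` on categories of symmetric forms, sending
`(X, ξ)` to `(F X, φ_X ∘ F ξ)` and `f` to `F f`. -/
def FormFunctor.onForms {A : Type u₁} [Category.{v₁} A] {B : Type u₂} [Category.{v₂} B]
    {DA : DualityData A} {DB : DualityData B} (Φ : FormFunctor DA DB) :
    SymmForm DA ⥤ SymmForm DB where
  obj a :=
    { carrier := Φ.F.obj a.carrier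
      form := Φ.F.map a.form ≫ Φ.duality.app (op a.carrier)
      symm := by
        have hc := Φ.compat a.carrier
        have hn := Φ.duality.naturality a.form.op
        simp only [Functor.comp_map, Functor.op_map, Quiver.Hom.unop_op] at hn
        rw [op_comp, Functor.map_comp, reassoc_of% hc, ← hn, ← Functor.map_comp_assoc,
          a.symm] }
  map {a b} f :=
    ⟨Φ.F.map f.1, by
      obtain ⟨f, hf⟩ := f
      have hn := Φ.duality.naturality f.op
      simp only [Functor.comp_map, Functor.op_map, Quiver.Hom.unop_op] at hn
      dsimp only
      rw [hf]
      simp only [Functor.map_comp, Category.assoc]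
      rw [hn]⟩
  map_id a := Subtype.ext (Φ.F.map_id a.carrier)
  map_comp f g := Subtype.ext (Φ.F.map_comp f.1 g.1)


/-- A morphism of symmetric forms whose underlying morphism is an isomorphism is an
isomorphism. -/
lemma symmForm_isIso_of_isIso {C : Type u₁} [Category.{v₁} C] {D : DualityData C}
    {a b : SymmForm D} (f : a ⟶ b) (h : IsIso f.1) : IsIso f := by
  obtain ⟨f, hf⟩ := f
  haveI : IsIso f := h
  refine ⟨⟨⟨inv f, ?_⟩, Subtype.ext (IsIso.hom_inv_id f),
    Subtype.ext (IsIso.inv_hom_id f)⟩⟩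
  rw [hf]
  simp [← Functor.map_comp, ← op_comp]

/-- If `F` is an equivalence of categories and the duality compatibility morphism is a
natural isomorphism, then the induced functor on categories of symmetric forms is an
equivalence of categories. -/
theorem statement0 {A : Type u₁} [Category.{v₁} A] {B : Type u₂} [Category.{v₂} B]
    {DA : DualityData A} {DB : DualityData B} (Φ : FormFunctor DA DB)
    (hF : Φ.F.IsEquivalence) (hφ : IsIso Φ.duality) :
    Φ.onForms.IsEquivalence := by
  have hfaithful : Φ.onForms.Faithful := by
    constructor
    intro a b f g h
    exact Subtype.ext (Φ.F.map_injective (congrArg Subtype.val h))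
  have hfull : Φ.onForms.Full := by
    constructor
    intro a b g
    refine ⟨⟨Φ.F.preimage g.1, ?_⟩, Subtype.ext (Φ.F.map_preimage g.1)⟩
    set f := Φ.F.preimage g.1 with hfdef
    have hg1 : g.1 = Φ.F.map f := (Φ.F.map_preimage g.1).symm
    have hg := g.2
    dsimp [FormFunctor.onForms] at hg
    rw [hg1] at hg
    have hn := Φ.duality.naturality f.op
    simp only [Functor.comp_map, Functor.op_map, Quiver.Hom.unop_op] at hn
    apply Φ.F.map_injective
    have : Φ.F.map a.form ≫ Φ.duality.app (op a.carrier)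
        = (Φ.F.map f ≫ Φ.F.map b.form ≫ Φ.F.map (DA.dual.map f.op))
          ≫ Φ.duality.app (op a.carrier) := by
      rw [hg]
      simp only [Category.assoc]
      rw [hn]
    have := (cancel_mono (Φ.duality.app (op a.carrier))).mp this
    simpa using this
  have hess : Φ.onForms.EssSurj := by
    constructor
    intro Y
    set X : A := Φ.F.objPreimage Y.carrier with hX
    set e : Φ.F.obj X ≅ Y.carrier := Φ.F.objObjPreimageIso Y.carrier with he
    set bform : Φ.F.obj X ⟶ DB.dual.obj (op (Φ.F.obj X)) :=
      e.hom ≫ Y.form ≫ DB.dual.map e.hom.op with hb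
    -- bform is a symmetric form on F X
    have hbsymm : DB.eta.app (Φ.F.obj X) ≫ DB.dual.map bform.op = bform := by
      have hnat := DB.eta.naturality e.hom
      simp only [Functor.id_map, Functor.comp_map, Functor.rightOp_map] at hnat
      rw [hb]
      simp only [op_comp, Functor.map_comp]
      rw [← Category.assoc, ← Category.assoc, ← hnat]
      simp only [Category.assoc]
      rw [reassoc_of% Y.symm]
    set ξ : X ⟶ DA.dual.obj (op X) :=
      Φ.F.preimage (bform ≫ inv (Φ.duality.app (op X))) with hξ
    have hFξ : Φ.F.map ξ ≫ Φ.duality.app (op X) = bform := by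
      rw [hξ, Φ.F.map_preimage]
      simp
    -- ξ is symmetric
    have hsymm : DA.eta.app X ≫ DA.dual.map ξ.op = ξ := by
      apply Φ.F.map_injective
      rw [← cancel_mono (Φ.duality.app (op X))]
      have hn := Φ.duality.naturality ξ.op
      simp only [Functor.comp_map, Functor.op_map, Quiver.Hom.unop_op] at hn
      have hc := Φ.compat X
      rw [Functor.map_comp, Category.assoc, hn, ← reassoc_of% hc,
        ← Functor.map_comp, ← op_comp, hFξ, hbsymm]
    refine ⟨⟨X, ξ, hsymm⟩, ⟨?_⟩⟩
    have hm : (Φ.onForms.obj ⟨X, ξ, hsymm⟩).form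
        = e.hom ≫ Y.form ≫ DB.dual.map e.hom.op := by
      dsimp [FormFunctor.onForms]
      rw [hFξ, hb]
    have : IsIso (⟨e.hom, hm⟩ : Φ.onForms.obj ⟨X, ξ, hsymm⟩ ⟶ Y) :=
      symmForm_isIso_of_isIso _ (by dsimp; exact Iso.isIso_hom e)
    exact asIso (⟨e.hom, hm⟩ : Φ.onForms.obj ⟨X, ξ, hsymm⟩ ⟶ Y)
  exact { }
end

section
/- Let (F, φ) : (A, *, α) → (B, *, β) be a form functor between categories with duality such that F is an equivalence of categories and φ is a natural isomorphism. Then (F, φ) is an equivalence of categories with duality: there exists a form functor (G, γ) : (B, *, β) → (A, *, α) such that the composites (F, φ) ∘ (G, γ) and (G, γ) ∘ (F, φ) are naturally isomorphic, as form functors, to the identity form functors on B and on A respectively. Moreover, any two such inverse form functors of (F, φ) are naturally isomorphic as form functors. -/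
open CategoryTheory Opposite

universe v₁ v₂ v₃ u₁ u₂ u₃

variable {A : Type u₁} [Category.{v₁} A] {B : Type u₂} [Category.{v₂} B]
  {E : Type u₃} [Category.{v₃} E]

/-- The identity form functor. -/
def FormFunctor.id (DA : DualityData A) : FormFunctor DA DA where
  F := 𝟭 A
  duality :=
    { app := fun X => 𝟙 (DA.dual.obj X)
      naturality := by intros; simp }
  compat := by intro X; simp

/-- Composition of form functors: `Φ.comp Ψ` is `Φ` followed by `Ψ`,
i.e. the composite form functor `Ψ ∘ Φ`. -/
def FormFunctor.comp {DA : DualityData A} {DB : DualityData B} {DE : DualityData E}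
    (Φ : FormFunctor DA DB) (Ψ : FormFunctor DB DE) : FormFunctor DA DE where
  F := Φ.F ⋙ Ψ.F
  duality :=
    { app := fun X => Ψ.F.map (Φ.duality.app X) ≫ Ψ.duality.app (op (Φ.F.obj X.unop))
      naturality := by
        intro X Y u
        have h1 := Φ.duality.naturality u
        have h2 := Ψ.duality.naturality (Φ.F.op.map u)
        simp only [Functor.comp_map, Functor.op_map, Functor.comp_obj, Functor.op_obj, Quiver.Hom.unop_op] at h1 h2 ⊢
        rw [Category.assoc, ← Functor.map_comp_assoc, h1, Functor.map_comp_assoc, h2] }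
  compat := by
    intro X
    have hΦ := Φ.compat X
    have hΨ := Ψ.compat (Φ.F.obj X)
    have hn := Ψ.duality.naturality (Φ.duality.app (op X)).op
    simp only [Functor.comp_map, Functor.op_map, Functor.comp_obj, Functor.op_obj, Quiver.Hom.unop_op] at hn ⊢
    rw [op_comp, Functor.map_comp, reassoc_of% hΨ, ← hn, ← Functor.map_comp_assoc, hΦ,
      Functor.map_comp_assoc]

/-- Two form functors are (naturally) isomorphic as form functors if there is a natural
isomorphism of the underlying functors compatible with the duality compatibility
morphisms. -/
def FormIsomorphic {DA : DualityData A} {DB : DualityData B}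
    (Φ Ψ : FormFunctor DA DB) : Prop :=
  ∃ t : Φ.F ⟶ Ψ.F, IsIso t ∧
    ∀ X : A,
      t.app (DA.dual.obj (op X)) ≫ Ψ.duality.app (op X) ≫ DB.dual.map (t.app X).op
        = Φ.duality.app (op X)


section Calculus

variable {DA : DualityData A} {DB : DualityData B} {DE : DualityData E}

theorem FormIsomorphic.symm {Φ Ψ : FormFunctor DA DB} (h : FormIsomorphic Φ Ψ) :
    FormIsomorphic Ψ Φ := by
  obtain ⟨t, ht, hc⟩ := h
  refine ⟨inv t, inferInstance, fun X => ?_⟩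
  rw [← hc X]
  simp [← Functor.map_comp, ← op_comp]

theorem FormIsomorphic.trans {Φ Ψ Θ : FormFunctor DA DB} (h : FormIsomorphic Φ Ψ)
    (h' : FormIsomorphic Ψ Θ) : FormIsomorphic Φ Θ := by
  obtain ⟨t, ht, hc⟩ := h
  obtain ⟨s, hs, hc'⟩ := h'
  refine ⟨t ≫ s, inferInstance, fun X => ?_⟩
  simp only [NatTrans.comp_app, op_comp, Functor.map_comp, Category.assoc]
  rw [← hc X, ← hc' X]
  simp

theorem formIso_comp_id (Φ : FormFunctor DA DB) :
    FormIsomorphic (Φ.comp (FormFunctor.id DB)) Φ := by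
  refine ⟨{ app := fun X => 𝟙 _,
            naturality := by intros; simp [FormFunctor.comp, FormFunctor.id] }, ?_, fun X => ?_⟩
  · exact @NatIso.isIso_of_isIso_app _ _ _ _ _ _ _ (fun _ => IsIso.id _)
  · simp [FormFunctor.comp, FormFunctor.id]

theorem formIso_id_comp (Φ : FormFunctor DA DB) :
    FormIsomorphic ((FormFunctor.id DA).comp Φ) Φ := by
  refine ⟨{ app := fun X => 𝟙 _,
            naturality := by intros; simp [FormFunctor.comp, FormFunctor.id] }, ?_, fun X => ?_⟩
  · exact @NatIso.isIso_of_isIso_app _ _ _ _ _ _ _ (fun _ => IsIso.id _)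
  · simp [FormFunctor.comp, FormFunctor.id]

end Calculus

section Calculus2

variable {DA : DualityData A} {DB : DualityData B} {DE : DualityData E}

theorem formIso_assoc {C' : Type*} [Category C'] {DC : DualityData C'}
    (Φ : FormFunctor DA DB) (Ψ : FormFunctor DB DE) (Θ : FormFunctor DE DC) :
    FormIsomorphic ((Φ.comp Ψ).comp Θ) (Φ.comp (Ψ.comp Θ)) := by
  refine ⟨{ app := fun X => 𝟙 _,
            naturality := by intros; simp [FormFunctor.comp] }, ?_, fun X => ?_⟩
  · exact @NatIso.isIso_of_isIso_app _ _ _ _ _ _ _ (fun _ => IsIso.id _)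
  · simp [FormFunctor.comp]

theorem formIso_whiskerLeft (Φ : FormFunctor DA DB) {Ψ₁ Ψ₂ : FormFunctor DB DE}
    (h : FormIsomorphic Ψ₁ Ψ₂) : FormIsomorphic (Φ.comp Ψ₁) (Φ.comp Ψ₂) := by
  obtain ⟨t, ht, hc⟩ := h
  refine ⟨Functor.whiskerLeft Φ.F t, ?_, fun X => ?_⟩
  · exact @NatIso.isIso_of_isIso_app _ _ _ _ _ _ _ (fun X => NatIso.isIso_app_of_isIso t (Φ.F.obj X))
  · have hn := t.naturality (Φ.duality.app (op X))
    have h0 := hc (Φ.F.obj X)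
    simp only [FormFunctor.comp, Functor.whiskerLeft_app, Functor.comp_obj, Functor.op_obj,
      Category.assoc] at *
    rw [reassoc_of% hn.symm, h0]

theorem formIso_whiskerRight {Ψ₁ Ψ₂ : FormFunctor DA DB} (h : FormIsomorphic Ψ₁ Ψ₂)
    (Φ : FormFunctor DB DE) : FormIsomorphic (Ψ₁.comp Φ) (Ψ₂.comp Φ) := by
  obtain ⟨t, ht, hc⟩ := h
  refine ⟨Functor.whiskerRight t Φ.F, ?_, fun X => ?_⟩
  · exact @NatIso.isIso_of_isIso_app _ _ _ _ _ _ _ (fun X => Functor.map_isIso Φ.F (t.app X))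
  · have hn := Φ.duality.naturality ((t.app X).op)
    simp only [Functor.comp_map, Functor.op_map, Quiver.Hom.unop_op] at hn
    simp only [FormFunctor.comp, Functor.whiskerRight_app, Functor.comp_obj, Functor.op_obj,
      Category.assoc]
    rw [← hn, ← Functor.map_comp_assoc, ← Functor.map_comp_assoc, Category.assoc, hc X]

end Calculus2

namespace FormInverse

variable {DA : DualityData A} {DB : DualityData B}
variable (Φ : FormFunctor DA DB) [Φ.F.IsEquivalence] [IsIso Φ.duality]

/-- The quasi-inverse functor. -/
noncomputable def G : B ⥤ A := Φ.F.asEquivalence.inverse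

/-- The counit of the equivalence. -/
noncomputable def ε : G Φ ⋙ Φ.F ⟶ 𝟭 B := Φ.F.asEquivalence.counit

instance : IsIso (ε Φ) := inferInstanceAs (IsIso Φ.F.asEquivalence.counitIso.hom)

/-- The duality compatibility morphism of the inverse form functor. -/
noncomputable def γ (Y : Bᵒᵖ) :
    (G Φ).obj (DB.dual.obj Y) ⟶ DA.dual.obj (op ((G Φ).obj Y.unop)) :=
  Φ.F.preimage ((ε Φ).app (DB.dual.obj Y) ≫ DB.dual.map ((ε Φ).app Y.unop).op ≫
    inv (Φ.duality.app (op ((G Φ).obj Y.unop))))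

theorem map_γ (Y : Bᵒᵖ) :
    Φ.F.map (γ Φ Y) = (ε Φ).app (DB.dual.obj Y) ≫ DB.dual.map ((ε Φ).app Y.unop).op ≫
      inv (Φ.duality.app (op ((G Φ).obj Y.unop))) :=
  Φ.F.map_preimage _

theorem map_γ_φ (Y : Bᵒᵖ) :
    Φ.F.map (γ Φ Y) ≫ Φ.duality.app (op ((G Φ).obj Y.unop))
      = (ε Φ).app (DB.dual.obj Y) ≫ DB.dual.map ((ε Φ).app Y.unop).op := by
  rw [map_γ]; simp

theorem γ_natural {Ya Yb : Bᵒᵖ} (u : Ya ⟶ Yb) :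
    (DB.dual ⋙ G Φ).map u ≫ γ Φ Yb = γ Φ Ya ≫ ((G Φ).op ⋙ DA.dual).map u := by
  apply Φ.F.map_injective
  rw [← cancel_mono (Φ.duality.app (op ((G Φ).obj Yb.unop)))]
  have hφn := Φ.duality.naturality ((G Φ).op.map u)
  simp only [Functor.comp_map, Functor.op_map, Functor.op_obj, Quiver.Hom.unop_op] at hφn
  simp only [Functor.comp_map, Functor.map_comp, Category.assoc, map_γ_φ, Functor.op_map]
  rw [hφn]
  rw [reassoc_of% ((ε Φ).naturality (DB.dual.map u)), reassoc_of% (map_γ_φ Φ Ya)]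
  simp only [Functor.id_map, Category.assoc, ← Functor.map_comp]
  congr 2
  apply Quiver.Hom.unop_inj
  simpa using ((ε Φ).naturality u.unop).symm

theorem γ_compat (Y : B) :
    DA.eta.app ((G Φ).obj Y) ≫ DA.dual.map (γ Φ (op Y)).op
      = (G Φ).map (DB.eta.app Y) ≫ γ Φ (op (DB.dual.obj (op Y))) := by
  apply Φ.F.map_injective
  rw [← cancel_mono (Φ.duality.app (op ((G Φ).obj (DB.dual.obj (op Y)))))]
  have h1 := Φ.duality.naturality ((γ Φ (op Y)).op)
  simp only [Functor.comp_map, Functor.op_map, Functor.op_obj, Quiver.Hom.unop_op] at h1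
  have h2 := Φ.compat ((G Φ).obj Y)
  have h3 := (ε Φ).naturality (DB.eta.app Y)
  simp only [Functor.comp_map, Functor.id_map, Functor.comp_obj, Functor.rightOp_obj,
    Functor.id_obj, Functor.op_obj] at h3
  have h4 := DB.eta.naturality ((ε Φ).app Y)
  simp only [Functor.comp_map, Functor.id_map, Functor.rightOp_map] at h4
  simp only [Functor.map_comp, Category.assoc]
  rw [h1, ← reassoc_of% h2, map_γ_φ Φ (op (DB.dual.obj (op Y))), reassoc_of% h3,
    reassoc_of% h4]
  simp only [← Functor.map_comp, ← op_comp, Category.assoc]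
  rw [map_γ_φ]

/-- The inverse form functor. -/
noncomputable def inverse : FormFunctor DB DA where
  F := G Φ
  duality :=
    { app := γ Φ
      naturality := fun _ _ u => γ_natural Φ u }
  compat := fun Y => γ_compat Φ Y

theorem iso_comp_right : FormIsomorphic ((inverse Φ).comp Φ) (FormFunctor.id DB) := by
  refine ⟨ε Φ, inferInstanceAs (IsIso Φ.F.asEquivalence.counitIso.hom), fun Y => ?_⟩
  simp only [FormFunctor.comp, FormFunctor.id, inverse, Category.id_comp]
  rw [map_γ_φ]
  simp

theorem iso_comp_left : FormIsomorphic (Φ.comp (inverse Φ)) (FormFunctor.id DA) := by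
  refine ⟨Φ.F.asEquivalence.unitIso.inv, Iso.isIso_inv _, fun X => ?_⟩
  simp only [FormFunctor.comp, FormFunctor.id, inverse, Category.id_comp]
  apply Φ.F.map_injective
  rw [← cancel_mono (Φ.duality.app (op ((G Φ).obj (Φ.F.obj X))))]
  have hu : ∀ Z : A, Φ.F.map (Φ.F.asEquivalence.unitIso.inv.app Z) = (ε Φ).app (Φ.F.obj Z) :=
    fun Z => (Φ.F.asEquivalence.counit_app_functor Z).symm
  have h1 := Φ.duality.naturality ((Φ.F.asEquivalence.unitIso.inv.app X).op)
  simp only [Functor.comp_map, Functor.op_map, Functor.op_obj, Quiver.Hom.unop_op,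
    Functor.comp_obj, Functor.id_obj, Functor.asEquivalence_functor,
    show Φ.F.asEquivalence.inverse = G Φ from rfl] at h1
  have h1' : Φ.F.map (DA.dual.map (Φ.F.asEquivalence.unitIso.inv.app X).op) ≫
      Φ.duality.app (op ((G Φ).obj (Φ.F.obj X)))
        = Φ.duality.app (op X) ≫
            DB.dual.map (Φ.F.map (Φ.F.asEquivalence.unitIso.inv.app X)).op := h1
  have h2 := (ε Φ).naturality (Φ.duality.app (op X))
  simp only [Functor.comp_map, Functor.id_map, Functor.comp_obj, Functor.op_obj,
    Functor.id_obj] at h2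
  simp only [Functor.map_comp, Category.assoc]
  erw [h1', hu (DA.dual.obj (op X)), hu X]
  rw [map_γ_φ Φ (op (Φ.F.obj X)), reassoc_of% h2]
  simp
  erw [Category.id_comp]
  rfl

end FormInverse

/-- If `F` is an equivalence of categories and the duality compatibility morphism is a
natural isomorphism, then the form functor `(F, φ)` is an equivalence of categories with
duality: it admits an inverse form functor, and any two inverses are naturally isomorphic
as form functors. -/
theorem statement1 {DA : DualityData A} {DB : DualityData B} (Φ : FormFunctor DA DB)
    (hF : Φ.F.IsEquivalence) (hφ : IsIso Φ.duality) :
    (∃ G : FormFunctor DB DA,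
        FormIsomorphic (G.comp Φ) (FormFunctor.id DB) ∧
        FormIsomorphic (Φ.comp G) (FormFunctor.id DA)) ∧
    ∀ G₁ G₂ : FormFunctor DB DA,
      (FormIsomorphic (G₁.comp Φ) (FormFunctor.id DB) ∧
        FormIsomorphic (Φ.comp G₁) (FormFunctor.id DA)) →
      (FormIsomorphic (G₂.comp Φ) (FormFunctor.id DB) ∧
        FormIsomorphic (Φ.comp G₂) (FormFunctor.id DA)) →
      FormIsomorphic G₁ G₂ := by
  haveI := hF
  haveI := hφ
  constructor
  · exact ⟨FormInverse.inverse Φ, FormInverse.iso_comp_right Φ, FormInverse.iso_comp_left Φ⟩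
  · rintro G₁ G₂ ⟨h₁B, _⟩ ⟨_, h₂A⟩
    exact ((formIso_comp_id G₁).symm.trans (formIso_whiskerLeft G₁ h₂A.symm)).trans
      ((formIso_assoc G₁ Φ G₂).symm.trans
        ((formIso_whiskerRight h₁B G₂).trans (formIso_id_comp G₂)))
end

section
/- Let (A, *, α) and (B, *, β) be categories with duality. On the functor category Fun(A, B) define ♯ sending a functor F : A → B to the functor F^♯ with F^♯(X) = (F(X*))* and F^♯(f) = (F(f*))*, and sending a natural transformation u : F → G to u^♯ : G^♯ → F^♯ with (u^♯)_X = (u_{X*})*; and define η_F : F → F^♯♯ by (η_F)_X = β_{F(X**)} ∘ F(α_X). Then: (i) one also has (η_F)_X = (F(α_X))** ∘ β_{F X}, the η_F are natural transformations, natural in F, and (Fun(A, B), ♯, η) is a category with duality, i.e. ((η_F)^♯) ∘ η_{F^♯} = 1_{F^♯} for every functor F; (ii) for every functor F : A → B, the assignments φ ↦ φ̂ with φ̂_X = φ_{X*} ∘ F(α_X) and φ̂ ↦ φ with φ_X = (F(α_X))* ∘ φ̂_{X*} are mutually inverse bijections between the duality compatibility morphisms φ making (F, φ) a form functor (A, *,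 α) → (B, *, β) and the natural transformations φ̂ making (F, φ̂) a symmetric form in (Fun(A, B), ♯, η); (iii) under this bijection, a natural transformation f : F → G is a natural transformation of form functors (F, φ) → (G, ψ) if and only if it is a morphism of symmetric forms (F, φ̂) → (G, ψ̂). -/
open CategoryTheory Opposite

universe v₁ v₂ u₁ u₂

variable {A : Type u₁} [Category.{v₁} A] {B : Type u₂} [Category.{v₂} B]

/-- The dual functor `F^♯` of a functor `F : A ⥤ B`, with `F^♯ X = (F (X^∗))^∗` and
`F^♯ f = (F (f^∗))^∗`. -/
def sharpObj (DA : DualityData A) (DB : DualityData B) (F : A ⥤ B) : A ⥤ B :=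
  DA.dual.rightOp ⋙ F.op ⋙ DB.dual

/-- The dual `u^♯ : G^♯ ⟶ F^♯` of a natural transformation `u : F ⟶ G`, with components
`(u^♯)_X = (u_{X^∗})^∗`. -/
def sharpMap (DA : DualityData A) (DB : DualityData B) {F G : A ⥤ B} (u : F ⟶ G) :
    sharpObj DA DB G ⟶ sharpObj DA DB F :=
  Functor.whiskerLeft DA.dual.rightOp (Functor.whiskerRight (NatTrans.op u) DB.dual)

/-- The duality functor `♯ : Fun(A,B)ᵒᵖ ⥤ Fun(A,B)`. -/
def sharpFunctor (DA : DualityData A) (DB : DualityData B) :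
    (A ⥤ B)ᵒᵖ ⥤ (A ⥤ B) where
  obj F := sharpObj DA DB F.unop
  map u := sharpMap DA DB u.unop
  map_id F := by
    ext X
    simp [sharpMap, sharpObj]
  map_comp u v := by
    ext X
    simp [sharpMap, sharpObj]

/-- The component at `X` of the double dual identification `η_F : F ⟶ F^♯♯`, given by
`(η_F)_X = β_{F(X^∗∗)} ∘ F(α_X)`. -/
def funEtaApp (DA : DualityData A) (DB : DualityData B) (F : A ⥤ B) (X : A) :
    F.obj X ⟶ (sharpObj DA DB (sharpObj DA DB F)).obj X :=
  F.map (DA.eta.app X) ≫ DB.eta.app (F.obj (DA.dual.obj (op (DA.dual.obj (op X)))))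

/-- The condition on a natural transformation `φ` with components
`φ_X : F(X^∗) ⟶ (F X)^∗` making `(F, φ)` a form functor `(A, ∗, α) ⟶ (B, ∗, β)`. -/
def dualCompat (DA : DualityData A) (DB : DualityData B) {F : A ⥤ B}
    (φ : DA.dual ⋙ F ⟶ F.op ⋙ DB.dual) : Prop :=
  ∀ X : A,
    DB.eta.app (F.obj X) ≫ DB.dual.map (φ.app (op X)).op
      = F.map (DA.eta.app X) ≫ φ.app (op (DA.dual.obj (op X)))

/-- The condition on a natural transformation `ψ : F ⟶ F^♯` making `(F, ψ)` a symmetric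
form in `(Fun(A,B), ♯, η)`, namely `ψ^♯ ∘ η_F = ψ`. -/
def isSymmForm (DA : DualityData A) (DB : DualityData B) {F : A ⥤ B}
    (ψ : F ⟶ sharpObj DA DB F) : Prop :=
  ∀ X : A,
    funEtaApp DA DB F X ≫ DB.dual.map (ψ.app (DA.dual.obj (op X))).op = ψ.app X


section Aux

variable (DA : DualityData A) (DB : DualityData B)

lemma eta_nat (D : DualityData B) {Y Z : B} (g : Y ⟶ Z) :
    g ≫ D.eta.app Z = D.eta.app Y ≫ D.dual.map ((D.dual.map g.op).op) := by
  simpa using D.eta.naturality g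

lemma phi_nat {F : A ⥤ B} (φ : DA.dual ⋙ F ⟶ F.op ⋙ DB.dual) {X Y : A} (f : X ⟶ Y) :
    F.map (DA.dual.map f.op) ≫ φ.app (op X) = φ.app (op Y) ≫ DB.dual.map (F.map f).op := by
  simpa using φ.naturality f.op

lemma recover {F : A ⥤ B} (φ : DA.dual ⋙ F ⟶ F.op ⋙ DB.dual) (X : A) :
    F.map (DA.eta.app (DA.dual.obj (op X))) ≫
      φ.app (op (DA.dual.obj (op (DA.dual.obj (op X))))) ≫
        DB.dual.map (F.map (DA.eta.app X)).op = φ.app (op X) := by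
  have h := phi_nat DA DB φ (DA.eta.app X)
  simp only [Functor.comp_obj, Functor.rightOp_obj, Functor.op_obj, unop_op] at h
  rw [← h, ← F.map_comp_assoc, DA.coherence X]; simp

/-- `η_F` as a natural transformation. -/
def etaHat (F : A ⥤ B) : F ⟶ sharpObj DA DB (sharpObj DA DB F) where
  app X := funEtaApp DA DB F X
  naturality X Y f := by
    have hA : f ≫ DA.eta.app Y = DA.eta.app X ≫ DA.dual.map ((DA.dual.map f.op).op) := by
      simpa using DA.eta.naturality f
    have hB := eta_nat DB (F.map (DA.dual.map ((DA.dual.map f.op).op)))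
    simp only [funEtaApp, sharpObj, Functor.comp_map, Functor.rightOp_map, Functor.op_map,
      Quiver.Hom.unop_op]
    rw [← F.map_comp_assoc, hA, F.map_comp_assoc, hB, Category.assoc]

/-- `η` as a natural transformation `𝟭 ⟶ ♯♯`. -/
def etaNat : 𝟭 (A ⥤ B) ⟶ (sharpFunctor DA DB).rightOp ⋙ sharpFunctor DA DB where
  app F := etaHat DA DB F
  naturality F G u := by
    ext X
    have h1 : u.app X ≫ G.map (DA.eta.app X) =
        F.map (DA.eta.app X) ≫ u.app (DA.dual.obj (op (DA.dual.obj (op X)))) := by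
      simpa using (u.naturality (DA.eta.app X)).symm
    have h2 := eta_nat DB (u.app (DA.dual.obj (op (DA.dual.obj (op X)))))
    simp only [Functor.id_map, NatTrans.comp_app, etaHat, funEtaApp, Functor.comp_map,
      Functor.rightOp_map, sharpFunctor, sharpMap, sharpObj, Functor.whiskerLeft_app,
      Functor.whiskerRight_app, NatTrans.op_app, Quiver.Hom.unop_op, Functor.comp_obj,
      Functor.rightOp_obj, Functor.op_obj, Functor.id_obj, unop_op]
    rw [← Category.assoc, h1, Category.assoc, h2, Category.assoc]

lemma eta_coherence (F : A ⥤ B) :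
    (etaNat DA DB).app ((sharpFunctor DA DB).obj (op F)) ≫
      (sharpFunctor DA DB).map ((etaNat DA DB).app F).op
        = 𝟙 ((sharpFunctor DA DB).obj (op F)) := by
  ext X
  have hcohB := DB.coherence (F.obj (DA.dual.obj (op (DA.dual.obj (op (DA.dual.obj (op X)))))))
  have hcohA := DA.coherence X
  simp only [sharpFunctor, sharpMap, sharpObj, etaNat, etaHat, funEtaApp, NatTrans.comp_app,
    Functor.comp_map, Functor.comp_obj, Functor.rightOp_obj, Functor.rightOp_map,
    Functor.op_obj, Functor.op_map, Functor.whiskerLeft_app, Functor.whiskerRight_app, NatTrans.op_app,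
    Quiver.Hom.unop_op, NatTrans.id_app, op_comp, Functor.map_comp]
  rw [Category.assoc, ← Category.assoc (DB.eta.app _), hcohB]
  simp [← F.map_comp, ← op_comp, ← Functor.map_comp, DA.coherence X]

/-- The forward map `φ ↦ φ̂` of (ii), as a natural transformation. -/
def hatPsi {F : A ⥤ B} (φ : DA.dual ⋙ F ⟶ F.op ⋙ DB.dual) : F ⟶ sharpObj DA DB F where
  app X := F.map (DA.eta.app X) ≫ φ.app (op (DA.dual.obj (op X)))
  naturality X Y f := by
    have hA : f ≫ DA.eta.app Y = DA.eta.app X ≫ DA.dual.map ((DA.dual.map f.op).op) := by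
      simpa using DA.eta.naturality f
    have h := phi_nat DA DB φ (DA.dual.map f.op)
    simp only [Functor.comp_obj, Functor.rightOp_obj, Functor.op_obj, unop_op] at h
    simp only [sharpObj, Functor.comp_map, Functor.rightOp_map, Functor.op_map,
      Quiver.Hom.unop_op]
    rw [← F.map_comp_assoc, hA, F.map_comp_assoc, h, Category.assoc]

lemma hatPsi_symm {F : A ⥤ B} (φ : DA.dual ⋙ F ⟶ F.op ⋙ DB.dual)
    (hφ : dualCompat DA DB φ) : isSymmForm DA DB (hatPsi DA DB φ) := by
  intro X
  have h1 := hφ (DA.dual.obj (op (DA.dual.obj (op X))))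
  have h2 := recover DA DB φ (DA.dual.obj (op X))
  dsimp only [hatPsi, funEtaApp, sharpObj, Functor.comp_obj, Functor.rightOp_obj, Functor.op_obj, Functor.id_obj, unop_op]
  simp only [hatPsi, funEtaApp, op_comp, Functor.map_comp, Category.assoc]
  rw [← Category.assoc (DB.eta.app _), h1, Category.assoc, h2]

/-- The inverse map `ψ̂ ↦ φ` of (ii), as a natural transformation. -/
def unhatPhi {F : A ⥤ B} (ψ : F ⟶ sharpObj DA DB F) : DA.dual ⋙ F ⟶ F.op ⋙ DB.dual where
  app X := ψ.app (DA.dual.obj X) ≫ DB.dual.map (F.map (DA.eta.app (unop X))).op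
  naturality X Y u := by
    have h := ψ.naturality (DA.dual.map u)
    simp only [sharpObj, Functor.comp_map, Functor.rightOp_map, Functor.op_map,
      Quiver.Hom.unop_op] at h
    have hA : u.unop ≫ DA.eta.app (unop X) =
        DA.eta.app (unop Y) ≫ DA.dual.map ((DA.dual.map u).op) := by
      simpa using DA.eta.naturality u.unop
    simp only [Functor.comp_map, Functor.op_map]
    erw [← Category.assoc, h, Category.assoc, ← Functor.map_comp, ← op_comp,
      ← F.map_comp, ← hA, F.map_comp, op_comp, Functor.map_comp, Category.assoc]
    rfl

lemma hat_unhat {F : A ⥤ B} (ψ : F ⟶ sharpObj DA DB F) (X : A) :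
    F.map (DA.eta.app X) ≫
      ψ.app (DA.dual.obj (op (DA.dual.obj (op X)))) ≫
        DB.dual.map (F.map (DA.eta.app (DA.dual.obj (op X)))).op = ψ.app X := by
  have h := ψ.naturality (DA.eta.app X)
  simp only [sharpObj, Functor.comp_map, Functor.rightOp_map, Functor.op_map,
    Functor.id_map, Quiver.Hom.unop_op, Functor.comp_obj, Functor.rightOp_obj,
    Functor.op_obj, Functor.id_obj, unop_op] at h
  erw [← Category.assoc, h, Category.assoc, ← Functor.map_comp, ← op_comp, ← F.map_comp,
    DA.coherence X]
  simp

lemma unhat_compat {F : A ⥤ B} (ψ : F ⟶ sharpObj DA DB F) (hψ : isSymmForm DA DB ψ) :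
    dualCompat DA DB (unhatPhi DA DB ψ) := by
  intro X
  have h1 := hψ X
  simp only [funEtaApp, Category.assoc] at h1
  have h2 := eta_nat DB (F.map (DA.eta.app X))
  simp only [Functor.comp_obj, Functor.rightOp_obj, Functor.op_obj, Functor.id_obj,
    unop_op] at h2
  dsimp only [unhatPhi, sharpObj, Functor.comp_obj, Functor.rightOp_obj, Functor.op_obj, Functor.id_obj, unop_op]
  simp only [unhatPhi, unop_op, op_comp, Functor.map_comp]
  rw [← Category.assoc, ← h2, Category.assoc, ← Category.assoc]
  exact h1.trans (hat_unhat DA DB ψ X).symm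

end Aux

/-- (i) The two formulas for `η_F` agree, the `η_F` are natural transformations, natural
in `F`, and `(Fun(A,B), ♯, η)` is a category with duality; (ii) `φ ↦ φ̂` and `φ̂ ↦ φ` are
mutually inverse bijections between duality compatibility morphisms on `F` and symmetric
forms on `F`; (iii) a natural transformation `f : F ⟶ G` is a natural transformation of
form functors `(F, φ) ⟶ (G, γ)` iff it is a morphism of symmetric forms
`(F, φ̂) ⟶ (G, γ̂)`. -/
theorem statement2 (DA : DualityData A) (DB : DualityData B) :
    -- (i)
    ((∀ (F : A ⥤ B) (X : A),
        funEtaApp DA DB F X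
          = DB.eta.app (F.obj X) ≫
              DB.dual.map ((DB.dual.map (F.map (DA.eta.app X)).op).op)) ∧
      (∃ e : 𝟭 (A ⥤ B) ⟶ (sharpFunctor DA DB).rightOp ⋙ sharpFunctor DA DB,
        (∀ (F : A ⥤ B) (X : A), (e.app F).app X = funEtaApp DA DB F X) ∧
        (∀ F : A ⥤ B,
          e.app ((sharpFunctor DA DB).obj (op F)) ≫ (sharpFunctor DA DB).map (e.app F).op
            = 𝟙 ((sharpFunctor DA DB).obj (op F))))) ∧
    -- (ii)
    (∀ F : A ⥤ B,
      ∃ e : {φ : DA.dual ⋙ F ⟶ F.op ⋙ DB.dual // dualCompat DA DB φ} ≃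
            {ψ : F ⟶ sharpObj DA DB F // isSymmForm DA DB ψ},
        (∀ (φ : {φ : DA.dual ⋙ F ⟶ F.op ⋙ DB.dual // dualCompat DA DB φ}) (X : A),
          (e φ).1.app X = F.map (DA.eta.app X) ≫ φ.1.app (op (DA.dual.obj (op X)))) ∧
        (∀ (ψ : {ψ : F ⟶ sharpObj DA DB F // isSymmForm DA DB ψ}) (X : A),
          (e.symm ψ).1.app (op X)
            = ψ.1.app (DA.dual.obj (op X)) ≫ DB.dual.map (F.map (DA.eta.app X)).op)) ∧
    -- (iii)
    (∀ (F G : A ⥤ B) (φ : DA.dual ⋙ F ⟶ F.op ⋙ DB.dual)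
        (γ : DA.dual ⋙ G ⟶ G.op ⋙ DB.dual),
        dualCompat DA DB φ → dualCompat DA DB γ →
        ∀ f : F ⟶ G,
          ((∀ X : A,
              f.app (DA.dual.obj (op X)) ≫ γ.app (op X) ≫ DB.dual.map (f.app X).op
                = φ.app (op X))
            ↔
           (∀ X : A,
              F.map (DA.eta.app X) ≫ φ.app (op (DA.dual.obj (op X)))
                = f.app X ≫ (G.map (DA.eta.app X) ≫ γ.app (op (DA.dual.obj (op X))))
                    ≫ DB.dual.map (f.app (DA.dual.obj (op X))).op))) := by
  refine ⟨⟨?_, etaNat DA DB, fun F X => rfl, eta_coherence DA DB⟩, ?_, ?_⟩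
  · -- (i-a)
    intro F X
    have h := eta_nat DB (F.map (DA.eta.app X))
    simp only [Functor.comp_obj, Functor.rightOp_obj, Functor.op_obj, Functor.id_obj,
      unop_op] at h
    exact h
  · -- (ii)
    intro F
    refine ⟨⟨fun φ => ⟨hatPsi DA DB φ.1, hatPsi_symm DA DB φ.1 φ.2⟩,
      fun ψ => ⟨unhatPhi DA DB ψ.1, unhat_compat DA DB ψ.1 ψ.2⟩, ?_, ?_⟩,
      fun φ X => rfl, fun ψ X => rfl⟩
    · intro φ
      apply Subtype.ext
      ext X
      exact (Category.assoc _ _ _).trans (recover DA DB φ.1 (unop X))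
    · intro ψ
      apply Subtype.ext
      ext X
      exact hat_unhat DA DB ψ.1 X
  · -- (iii)
    intro F G φ γ hφ hγ f
    constructor
    · intro h X
      have hP := h (DA.dual.obj (op X))
      have hf := f.naturality (DA.eta.app X)
      simp only [Functor.comp_obj, Functor.rightOp_obj, Functor.op_obj, Functor.id_obj,
        unop_op, Functor.id_map] at hf
      rw [← hP, ← Category.assoc, hf]
      simp only [Category.assoc]
    · intro h X
      have hQ := h (DA.dual.obj (op X))
      have hrecφ := recover DA DB φ X
      have hrecγ := recover DA DB γ X
      have hf := f.naturality (DA.eta.app X)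
      simp only [Functor.comp_obj, Functor.rightOp_obj, Functor.op_obj, Functor.id_obj,
        unop_op, Functor.id_map] at hf
      have hdual : DB.dual.map (f.app (DA.dual.obj (op (DA.dual.obj (op X))))).op ≫
          DB.dual.map (F.map (DA.eta.app X)).op
            = DB.dual.map (G.map (DA.eta.app X)).op ≫ DB.dual.map (f.app X).op := by
        rw [← Functor.map_comp, ← op_comp, hf, op_comp, Functor.map_comp]
      calc f.app (DA.dual.obj (op X)) ≫ γ.app (op X) ≫ DB.dual.map (f.app X).op
          = f.app (DA.dual.obj (op X)) ≫
              (G.map (DA.eta.app (DA.dual.obj (op X))) ≫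
                γ.app (op (DA.dual.obj (op (DA.dual.obj (op X))))) ≫
                  DB.dual.map (G.map (DA.eta.app X)).op) ≫ DB.dual.map (f.app X).op := by
            rw [hrecγ]
        _ = (f.app (DA.dual.obj (op X)) ≫
              (G.map (DA.eta.app (DA.dual.obj (op X))) ≫
                γ.app (op (DA.dual.obj (op (DA.dual.obj (op X)))))) ≫
                  DB.dual.map (f.app (DA.dual.obj (op (DA.dual.obj (op X))))).op) ≫
                    DB.dual.map (F.map (DA.eta.app X)).op := by
            simp only [Category.assoc, hdual]
        _ = (F.map (DA.eta.app (DA.dual.obj (op X))) ≫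
              φ.app (op (DA.dual.obj (op (DA.dual.obj (op X)))))) ≫
                DB.dual.map (F.map (DA.eta.app X)).op := by rw [← hQ]
        _ = φ.app (op X) := by simpa [Category.assoc] using hrecφ
end

section
/- Let C be a symmetric monoidal closed category with braiding c, and let A, X, Y be objects of C. For a morphism μ : X ⊗ Y → A let φ_μ : X → [Y, A] denote the morphism corresponding, under the adjunction between Y ⊗ − and [Y, −], to the composite μ ∘ c_{Y,X} : Y ⊗ X → A. Then, with D_A : Cᵒᵖ → C the functor X ↦ [X, A] and can^A the canonical double dual identification, one has D_A(φ_μ) ∘ can^A_Y = φ_{μ ∘ c_{Y,X}} : Y → [X, A]. In particular, if X = Y and μ : X ⊗ X → A satisfies μ ∘ c_{X,X} = μ, then (X, φ_μ) is a symmetric form in the category with duality (C, D_A, can^A), i.e. D_A(φ_μ) ∘ can^A_X = φ_μ. -/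
open CategoryTheory CategoryTheory.MonoidalCategory CategoryTheory.MonoidalClosed Opposite

universe v u

variable (C : Type u) [Category.{v} C] [MonoidalCategory C] [SymmetricCategory C]
  [MonoidalClosed C]

/-- The duality functor `D_A : Cᵒᵖ ⥤ C`, `X ↦ [X, A]`, acting on morphisms by
precomposition. -/
noncomputable def dualFun (A : C) : Cᵒᵖ ⥤ C :=
  MonoidalClosed.internalHom.flip.obj A

/-- The canonical double dual identification `can^A_X : X ⟶ [[X, A], A]`. -/
noncomputable def canApp (A X : C) : X ⟶ (ihom ((ihom X).obj A)).obj A :=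
  MonoidalClosed.curry ((β_ ((ihom X).obj A) X).hom ≫ (ihom.ev X).app A)

/-- For `μ : X ⊗ Y ⟶ A`, the morphism `φ_μ : X ⟶ [Y, A]` corresponding under the
adjunction between `Y ⊗ -` and `[Y, -]` to the composite `μ ∘ c_{Y,X} : Y ⊗ X ⟶ A`. -/
noncomputable def phiOf {X Y A : C} (μ : X ⊗ Y ⟶ A) : X ⟶ (ihom Y).obj A :=
  MonoidalClosed.curry ((β_ Y X).hom ≫ μ)

/-- `D_A(φ_μ) ∘ can^A_Y = φ_{μ ∘ c_{Y,X}}`; in particular a morphism `μ : X ⊗ X ⟶ A`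
invariant under the braiding yields a symmetric form `(X, φ_μ)` in `(C, D_A, can^A)`. -/
theorem statement4 (A : C) :
    (∀ (X Y : C) (μ : X ⊗ Y ⟶ A),
        canApp C A Y ≫ (dualFun C A).map (phiOf C μ).op
          = phiOf C ((β_ Y X).hom ≫ μ)) ∧
    ∀ (X : C) (μ : X ⊗ X ⟶ A), (β_ X X).hom ≫ μ = μ →
      canApp C A X ≫ (dualFun C A).map (phiOf C μ).op = phiOf C μ := by
  have key : ∀ (X Y : C) (μ : X ⊗ Y ⟶ A),
      canApp C A Y ≫ (dualFun C A).map (phiOf C μ).op = phiOf C ((β_ Y X).hom ≫ μ) := by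
    intro X Y μ
    apply uncurry_injective
    simp only [dualFun, canApp, phiOf, MonoidalClosed.internalHom, Functor.flip_obj_map,
      Functor.comp_map, Quiver.Hom.unop_op, uncurry_eq, MonoidalCategory.whiskerLeft_comp,
      Category.assoc, id_tensor_pre_app_comp_ev]
    rw [whisker_exchange_assoc]
    simp [← uncurry_eq, uncurry_curry]
  refine ⟨key, fun X μ h => ?_⟩
  rw [key X X μ, h]
end

section
/- Let 𝒜 be an abelian category and let A_{ij} (0 ≤ i, j ≤ 2) be a commutative 3×3 diagram in 𝒜 whose three rows A_{i0} → A_{i1} → A_{i2} and three columns A_{0j} → A_{1j} → A_{2j} are short exact sequences. Let C be the pushout of A_{01} ← A_{00} → A_{10}, with structure maps u : A_{01} → C and v : A_{10} → C, and let P be the pullback of A_{21} → A_{22} ← A_{12}, with projections p : P → A_{21} and q : P → A_{12}. Let c_{11}, c_{02}, c_{20} : C → A_{11}, A_{02}, A_{20} be the unique morphisms determined by the pushout property with c_{11}∘u = (A_{01}→A_{11}) and c_{11}∘v = (A_{10}→A_{11}); c_{02}∘u = (A_{01}→A_{02}) and c_{02}∘v = 0; c_{20}∘u = 0 and c_{20}∘v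 = (A_{10}→A_{20}) (these cocones exist because the composite of the two morphisms in each row and in each column is zero). Dually, let p_{11}, p_{02}, p_{20} : A_{11}, A_{02}, A_{20} → P be the unique morphisms determined by the pullback property with p∘p_{11} = (A_{11}→A_{21}) and q∘p_{11} = (A_{11}→A_{12}); p∘p_{02} = 0 and q∘p_{02} = (A_{02}→A_{12}); p∘p_{20} = (A_{20}→A_{21}) and q∘p_{20} = 0. Then p_{11} ∘ c_{11} = p_{20} ∘ c_{20} + p_{02} ∘ c_{02} as morphisms C → P. -/
open CategoryTheory CategoryTheory.Limits

universe v u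

/-- The 3×3 lemma identity: for a commutative 3×3 diagram with short exact rows and
columns, with `Co` the pushout of the upper left corner and `P` the pullback of the
lower right corner, the canonical morphisms satisfy
`p₁₁ ∘ c₁₁ = p₂₀ ∘ c₂₀ + p₀₂ ∘ c₀₂`. -/
theorem statement5 {𝒜 : Type u} [Category.{v} 𝒜] [Abelian 𝒜]
    {A₀₀ A₀₁ A₀₂ A₁₀ A₁₁ A₁₂ A₂₀ A₂₁ A₂₂ : 𝒜}
    (r₀₀ : A₀₀ ⟶ A₀₁) (r₀₁ : A₀₁ ⟶ A₀₂)
    (r₁₀ : A₁₀ ⟶ A₁₁) (r₁₁ : A₁₁ ⟶ A₁₂)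
    (r₂₀ : A₂₀ ⟶ A₂₁) (r₂₁ : A₂₁ ⟶ A₂₂)
    (c₀₀ : A₀₀ ⟶ A₁₀) (c₀₁ : A₁₀ ⟶ A₂₀)
    (c₁₀ : A₀₁ ⟶ A₁₁) (c₁₁ : A₁₁ ⟶ A₂₁)
    (c₂₀ : A₀₂ ⟶ A₁₂) (c₂₁ : A₁₂ ⟶ A₂₂)
    (sq₁ : r₀₀ ≫ c₁₀ = c₀₀ ≫ r₁₀)
    (sq₂ : r₀₁ ≫ c₂₀ = c₁₀ ≫ r₁₁)
    (sq₃ : r₁₀ ≫ c₁₁ = c₀₁ ≫ r₂₀)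
    (sq₄ : r₁₁ ≫ c₂₁ = c₁₁ ≫ r₂₁)
    (wr₀ : r₀₀ ≫ r₀₁ = 0) (wr₁ : r₁₀ ≫ r₁₁ = 0) (wr₂ : r₂₀ ≫ r₂₁ = 0)
    (wc₀ : c₀₀ ≫ c₀₁ = 0) (wc₁ : c₁₀ ≫ c₁₁ = 0) (wc₂ : c₂₀ ≫ c₂₁ = 0)
    (hr₀ : (ShortComplex.mk r₀₀ r₀₁ wr₀).ShortExact)
    (hr₁ : (ShortComplex.mk r₁₀ r₁₁ wr₁).ShortExact)
    (hr₂ : (ShortComplex.mk r₂₀ r₂₁ wr₂).ShortExact)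
    (hc₀ : (ShortComplex.mk c₀₀ c₀₁ wc₀).ShortExact)
    (hc₁ : (ShortComplex.mk c₁₀ c₁₁ wc₁).ShortExact)
    (hc₂ : (ShortComplex.mk c₂₀ c₂₁ wc₂).ShortExact)
    {Co P : 𝒜} (u : A₀₁ ⟶ Co) (v : A₁₀ ⟶ Co) (p : P ⟶ A₂₁) (q : P ⟶ A₁₂)
    (hCo : IsPushout r₀₀ c₀₀ u v) (hP : IsPullback p q r₂₁ c₂₁) :
    hCo.desc c₁₀ r₁₀ sq₁ ≫ hP.lift c₁₁ r₁₁ sq₄.symm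
      = hCo.desc 0 c₀₁ (by simp [wc₀]) ≫ hP.lift r₂₀ 0 (by simp [wr₂])
          + hCo.desc r₀₁ 0 (by simp [wr₀]) ≫ hP.lift 0 c₂₀ (by simp [wc₂]) := by
  apply hCo.hom_ext <;> apply hP.hom_ext <;>
    simp [sq₂, sq₃, wc₁, wr₁]
end

section
/- Let K be a pretriangulated category with shift functor T. Suppose given an additive functor ♯ : Kᵒᵖ → K (write X^♯ for its value on an object X and f^♯ : Y^♯ → X^♯ for its value on a morphism f : X → Y), a natural transformation ϖ with components ϖ_X : X → X^♯♯ (so that f^♯♯ ∘ ϖ_X = ϖ_Y ∘ f for all f : X → Y), and a natural isomorphism λ with components λ_X : X^♯ ≅ T((T X)^♯), such that: (1) for every object X, T((λ_X)^♯) ∘ λ_{(T X)^♯} ∘ ϖ_{T X} = T(ϖ_X) as morphisms T X → T(X^♯♯), and (2) (ϖ_X)^♯ ∘ ϖ_{X^♯} = 1_{X^♯} for every object X. Then the following two conditions are equivalent: (a) for every distinguished triangle X →f Y →g Z →h T X in K, the triangle Z^♯ →(g^♯) Y^♯ →(f^♯) X^♯ →(T(h^♯) ∘ λ_X) T(Z^♯)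 is distinguished; (b) for every distinguished triangle X →f Y →g Z →h T X in K, the triangle (T Y)^♯ →((T f)^♯) (T X)^♯ →(h^♯) Z^♯ →(λ_Y ∘ g^♯) T((T Y)^♯) is distinguished. -/
open CategoryTheory CategoryTheory.Limits CategoryTheory.Pretriangulated Opposite

universe v u

/-- For a pretriangulated category `C` with shift `T = ⟦1⟧`, equipped with an additive
functor `♯ = D : Cᵒᵖ ⥤ C`, a double dual identification `ϖ` and a natural isomorphism
`λ_X : X^♯ ≅ T ((T X)^♯)` satisfying the coherence conditions (1) and (2), the condition
(a) that duals of distinguished triangles are distinguished is equivalent to the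
condition (b) on the alternative rotated dual triangles. -/
theorem statement6 {C : Type u} [Category.{v} C] [HasZeroObject C] [Preadditive C]
    [HasShift C ℤ] [∀ n : ℤ, (shiftFunctor C n).Additive] [Pretriangulated C]
    (D : Cᵒᵖ ⥤ C) [D.Additive]
    (ϖ : 𝟭 C ⟶ D.rightOp ⋙ D)
    (lam : D ≅ (shiftFunctor C (1 : ℤ)).op ⋙ D ⋙ shiftFunctor C (1 : ℤ))
    (h1 : ∀ X : C,
      ϖ.app ((shiftFunctor C (1 : ℤ)).obj X) ≫
          lam.hom.app (op (D.obj (op ((shiftFunctor C (1 : ℤ)).obj X)))) ≫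
          (shiftFunctor C (1 : ℤ)).map (D.map (lam.hom.app (op X)).op)
        = (shiftFunctor C (1 : ℤ)).map (ϖ.app X))
    (h2 : ∀ X : C,
      ϖ.app (D.obj (op X)) ≫ D.map ((ϖ.app X).op) = 𝟙 (D.obj (op X))) :
    (∀ T : Triangle C, (T ∈ distTriang C) →
        Triangle.mk (D.map T.mor₂.op) (D.map T.mor₁.op)
            (lam.hom.app (op T.obj₁) ≫ (shiftFunctor C (1 : ℤ)).map (D.map T.mor₃.op))
          ∈ distTriang C) ↔
    (∀ T : Triangle C, (T ∈ distTriang C) →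
        Triangle.mk (D.map ((shiftFunctor C (1 : ℤ)).map T.mor₁).op) (D.map T.mor₃.op)
            (D.map T.mor₂.op ≫ lam.hom.app (op T.obj₂))
          ∈ distTriang C) := by
  constructor
  · intro ha T hT
    rw [Pretriangulated.rotate_distinguished_triangle]
    refine Pretriangulated.isomorphic_distinguished _
      (ha T.rotate (Pretriangulated.rot_of_distTriang T hT)) _ ?_
    dsimp only [Triangle.rotate, Triangle.mk]
    refine Triangle.isoMk _ _ (Iso.refl _) (Iso.refl _) (lam.app (op T.obj₂)).symm ?_ ?_ ?_
    · simp
    · have := lam.inv.naturality T.mor₂.op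
      dsimp
      rw [Category.assoc, Iso.hom_inv_id_app, Category.comp_id, Category.id_comp]
    · simp [Functor.map_neg]
      rfl
  · intro hb T hT
    refine Pretriangulated.isomorphic_distinguished _
      (Pretriangulated.rot_of_distTriang _ (Pretriangulated.rot_of_distTriang _
        (hb T hT))) _ ?_
    dsimp only [Triangle.rotate, Triangle.mk]
    refine Triangle.isoMk _ _ (Iso.refl _) (lam.app (op T.obj₂)) ?iso3 ?_ ?_ ?_
    case iso3 =>
      exact Iso.mk (-(lam.hom.app (op T.obj₁))) (-(lam.inv.app (op T.obj₁)))
        (by simp) (by simp)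
    · simp
    · have := lam.hom.naturality T.mor₁.op
      dsimp at this ⊢
      simp [this]
    · simp
      exact (by rw [Preadditive.comp_neg, neg_neg] : lam.hom.app (op T.obj₁) ≫
        (shiftFunctor C 1).map (D.map T.mor₃.op) =
          -(lam.hom.app (op T.obj₁) ≫ (-(shiftFunctor C 1).map (D.map T.mor₃.op))))
end
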